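/- arXiv:2601.22681 — 2 statements merged into one kernel-verified Lean document; each statement's English description precedes it below -/
import Mathlib

section
/- Let G ⊆ ℝ^k be open, K ⊆ G a nonempty compact set, f ∈ C¹(G; ℝ^{n−k}), and define g(x) = (x, f(x)) for x ∈ G, so that Dg(x) has rank k and the tangent space T_{g(x)} := range Dg(x) is k-dimensional. Set M := sup_{x∈K} ‖Dg(x)‖. Then for all x, y ∈ K one has ‖P_{T_{g(x)}^⊥} − P_{T_{g(y)}^⊥}‖ = ‖P_{T_{g(x)}} − P_{T_{g(y)}}‖ ≤ (2M + 2M³) ‖Dg(x) − Dg(y)‖; in particular, the map w ↦ T_{g(w)}^⊥ ∈ G_{n−k}(ℝⁿ) is continuous on K, and for any convex body C ⊆ ℝⁿ the map w ↦ ℋ^{n−k}(P_{T_{g(w)}^⊥}(C)) is continuous on K. -/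
open MeasureTheory Metric Filter Set
open scoped ENNReal NNReal Topology Pointwise

set_option maxHeartbeats 1000000
open scoped RealInnerProductSpace
noncomputable section

/-- `ℝⁿ` with its Euclidean structure. -/
abbrev Euc (n : ℕ) := EuclideanSpace ℝ (Fin n)

/-- A convex body: a nonempty compact convex subset of `ℝⁿ` with `0` in its relative
interior. -/
def IsConvexBody {n : ℕ} (C : Set (Euc n)) : Prop :=
  C.Nonempty ∧ IsCompact C ∧ Convex ℝ C ∧ (0 : Euc n) ∈ intrinsicInterior ℝ C

/-- Orthogonal projection onto a linear subspace, as a map `ℝⁿ → ℝⁿ`. -/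
def projF {n : ℕ} (L : Submodule ℝ (Euc n)) : Euc n → Euc n :=
  fun v => (L.orthogonalProjectionOnto v : Euc n)

/-- Orthogonal projection onto a linear subspace, as a continuous linear endomorphism
of `ℝⁿ`. -/
def projCLM {n : ℕ} (L : Submodule ℝ (Euc n)) : Euc n →L[ℝ] Euc n :=
  L.subtypeL.comp L.orthogonalProjectionOnto

/-- `ω_j`: the volume of the `j`-dimensional Euclidean unit ball. -/
def unitBallVol (j : ℕ) : ℝ≥0∞ := volume (Metric.closedBall (0 : EuclideanSpace ℝ (Fin j)) 1)

/-- The anisotropic Minkowski quotient `λⁿ(S ⊕ rC) / (ω_{n-k} r^{n-k})`. -/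
def minkRatio (n k : ℕ) (S C : Set (Euc n)) (r : ℝ) : ℝ≥0∞ :=
  volume (S + r • C) / (unitBallVol (n - k) * ENNReal.ofReal (r ^ (n - k)))

/-- `S ⊆ ℝⁿ` is countably `ℋ^k`-rectifiable: it is measurable and covered, up to an
`ℋ^k`-null set, by countably many Lipschitz images of `ℝ^k`. -/
def CountablyRectifiable (n k : ℕ) (S : Set (Euc n)) : Prop :=
  MeasurableSet S ∧
  ∃ f : ℕ → (EuclideanSpace ℝ (Fin k) → Euc n),
    (∀ i, ∃ K : ℝ≥0, LipschitzWith K (f i)) ∧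
    μH[(k : ℝ)] (S \ ⋃ i, Set.range (f i)) = 0

/-- `L` is the `k`-dimensional approximate tangent space of `S` at `x`: it is a
`k`-dimensional linear subspace such that
`r^{-k} ∫_S φ((z-x)/r) dℋ^k(z) → ∫_L φ dℋ^k` as `r → 0+` for all test functions `φ`. -/
def IsApproxTangent (n k : ℕ) (S : Set (Euc n)) (x : Euc n) (L : Submodule ℝ (Euc n)) : Prop :=
  Module.finrank ℝ L = k ∧
  ∀ φ : Euc n → ℝ, ContDiff ℝ (⊤ : ℕ∞) φ → HasCompactSupport φ →
    Tendsto (fun r : ℝ => (∫ z in S, φ (r⁻¹ • (z - x)) ∂(μH[(k : ℝ)])) / r ^ k)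
      (𝓝[>] (0 : ℝ))
      (𝓝 (∫ y in (L : Set (Euc n)), φ y ∂(μH[(k : ℝ)])))

/-- The functional `C ↦ (1/ω_{n-k}) ∫_S ℋ^{n-k}(C_x) dℋ^k(x)`, where
`C_x = P_{(T^k_x S)^⊥}(C)` and `T` is a choice of tangent field for `S`. -/
def anisoIntegral (n k : ℕ) (S : Set (Euc n)) (T : Euc n → Submodule ℝ (Euc n))
    (C : Set (Euc n)) : ℝ≥0∞ :=
  (∫⁻ x in S, μH[((n - k : ℕ) : ℝ)] (projF (T x)ᗮ '' C) ∂μH[(k : ℝ)]) / unitBallVol (n - k)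

/-- The radial function `ρ_D(x) = max {t ≥ 0 : t • x ∈ D}` of a set `D`. -/
def radial {n : ℕ} (D : Set (Euc n)) (x : Euc n) : ℝ :=
  sSup {t : ℝ | 0 ≤ t ∧ t • x ∈ D}

/-- The map `x ↦ (x, f x)`, viewed as a map `ℝ^k → ℝⁿ` via the coordinate splitting of
`ℝⁿ` into the first `k` and the last `n - k` coordinates. -/
def graphMap (n k : ℕ) (hkn : k ≤ n)
    (f : EuclideanSpace ℝ (Fin k) → EuclideanSpace ℝ (Fin (n - k))) :
    EuclideanSpace ℝ (Fin k) → Euc n :=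
  fun x => (EuclideanSpace.equiv (Fin n) ℝ).symm
    (fun j : Fin n =>
      if h : (j : ℕ) < k then x ⟨(j : ℕ), h⟩
      else f x ⟨(j : ℕ) - k, by have := j.isLt; omega⟩)

/-- `Γ ⊆ ℝⁿ` is a `C¹` `k`-graph: up to a rotation of `ℝⁿ`, it is the graph of a `C¹`
function from an open subset of `ℝ^k` to `ℝ^{n-k}`. -/
def IsC1Graph (n k : ℕ) (hkn : k ≤ n) (Γ : Set (Euc n)) : Prop :=
  ∃ (e : Euc n ≃ₗᵢ[ℝ] Euc n) (G : Set (EuclideanSpace ℝ (Fin k)))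
    (f : EuclideanSpace ℝ (Fin k) → EuclideanSpace ℝ (Fin (n - k))),
    IsOpen G ∧ ContDiffOn ℝ 1 f G ∧ Γ = e '' (graphMap n k hkn f '' G)

namespace St5
variable {n k : ℕ}

def embA (n k : ℕ) : EuclideanSpace ℝ (Fin k) →ₗ[ℝ] Euc n where
  toFun x := (EuclideanSpace.equiv (Fin n) ℝ).symm
    (fun j : Fin n => if h : (j : ℕ) < k then x ⟨(j : ℕ), h⟩ else 0)
  map_add' x y := by ext j; by_cases h : (j : ℕ) < k <;> simp [h]
  map_smul' c x := by ext j; by_cases h : (j : ℕ) < k <;> simp [h]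

def embB (n k : ℕ) (hkn : k ≤ n) : EuclideanSpace ℝ (Fin (n - k)) →ₗ[ℝ] Euc n where
  toFun y := (EuclideanSpace.equiv (Fin n) ℝ).symm
    (fun j : Fin n => if h : (j : ℕ) < k then 0 else y ⟨(j : ℕ) - k, by have := j.isLt; omega⟩)
  map_add' x y := by ext j; by_cases h : (j : ℕ) < k <;> simp [h]
  map_smul' c x := by ext j; by_cases h : (j : ℕ) < k <;> simp [h]

def esum (hkn : k ≤ n) : (Fin k ⊕ Fin (n - k)) ≃ Fin n :=
  finSumFinEquiv.trans (finCongr (by omega))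

lemma coe_esum_inl (hkn : k ≤ n) (i : Fin k) : ((esum hkn (Sum.inl i) : Fin n) : ℕ) = (i : ℕ) := by
  simp [esum]

lemma coe_esum_inr (hkn : k ≤ n) (i : Fin (n - k)) :
    ((esum hkn (Sum.inr i) : Fin n) : ℕ) = k + (i : ℕ) := by
  simp [esum]

lemma embA_apply_inl (hkn : k ≤ n) (u : EuclideanSpace ℝ (Fin k)) (i : Fin k) :
    embA n k u (esum hkn (Sum.inl i)) = u i := by
  have h : ((esum hkn (Sum.inl i) : Fin n) : ℕ) < k := by rw [coe_esum_inl]; exact i.isLt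
  show dite _ _ _ = _
  rw [dif_pos h]
  exact congrArg (fun j => u j) (Fin.ext (coe_esum_inl hkn i))

lemma embA_apply_inr (hkn : k ≤ n) (u : EuclideanSpace ℝ (Fin k)) (i : Fin (n - k)) :
    embA n k u (esum hkn (Sum.inr i)) = 0 := by
  have h : ¬ ((esum hkn (Sum.inr i) : Fin n) : ℕ) < k := by rw [coe_esum_inr]; omega
  show dite _ _ _ = _
  rw [dif_neg h]

lemma embB_apply_inl (hkn : k ≤ n) (a : EuclideanSpace ℝ (Fin (n - k))) (i : Fin k) :
    embB n k hkn a (esum hkn (Sum.inl i)) = 0 := by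
  have h : ((esum hkn (Sum.inl i) : Fin n) : ℕ) < k := by rw [coe_esum_inl]; exact i.isLt
  show dite _ _ _ = _
  rw [dif_pos h]

lemma embB_apply_inr (hkn : k ≤ n) (a : EuclideanSpace ℝ (Fin (n - k))) (i : Fin (n - k)) :
    embB n k hkn a (esum hkn (Sum.inr i)) = a i := by
  have h : ¬ ((esum hkn (Sum.inr i) : Fin n) : ℕ) < k := by rw [coe_esum_inr]; omega
  show dite _ _ _ = _
  rw [dif_neg h]
  refine congrArg (fun j => a j) (Fin.ext ?_)
  show ((esum hkn (Sum.inr i) : Fin n) : ℕ) - k = (i : ℕ)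
  rw [coe_esum_inr]; omega

lemma inner_embA_embA (hkn : k ≤ n) (u v : EuclideanSpace ℝ (Fin k)) :
    ⟪embA n k u, embA n k v⟫ = ⟪u, v⟫ := by
  rw [PiLp.inner_apply, PiLp.inner_apply, ← Equiv.sum_comp (esum hkn), Fintype.sum_sum_type]
  simp [embA_apply_inl hkn, embA_apply_inr hkn]

lemma inner_embB_embB (hkn : k ≤ n) (a b : EuclideanSpace ℝ (Fin (n - k))) :
    ⟪embB n k hkn a, embB n k hkn b⟫ = ⟪a, b⟫ := by
  rw [PiLp.inner_apply, PiLp.inner_apply, ← Equiv.sum_comp (esum hkn), Fintype.sum_sum_type]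
  simp [embB_apply_inl hkn, embB_apply_inr hkn]

lemma inner_embA_embB (hkn : k ≤ n) (u : EuclideanSpace ℝ (Fin k))
    (a : EuclideanSpace ℝ (Fin (n - k))) :
    ⟪embA n k u, embB n k hkn a⟫ = 0 := by
  rw [PiLp.inner_apply, ← Equiv.sum_comp (esum hkn), Fintype.sum_sum_type]
  simp [embA_apply_inl hkn, embA_apply_inr hkn, embB_apply_inl hkn, embB_apply_inr hkn]

lemma inner_emb_add (hkn : k ≤ n) (u v : EuclideanSpace ℝ (Fin k))
    (a b : EuclideanSpace ℝ (Fin (n - k))) :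
    ⟪embA n k u + embB n k hkn a, embA n k v + embB n k hkn b⟫ = ⟪u, v⟫ + ⟪a, b⟫ := by
  have hBA : ⟪embB n k hkn a, embA n k v⟫ = 0 := by
    rw [real_inner_comm]; exact inner_embA_embB hkn v a
  rw [inner_add_left, inner_add_right, inner_add_right, inner_embA_embA hkn,
    inner_embB_embB hkn, inner_embA_embB hkn, hBA]
  ring

open ContinuousLinearMap in
lemma exists_inv (S : Euc k →L[ℝ] Euc k) (hS : ∀ v, ‖v‖ ^ 2 ≤ ⟪S v, v⟫) :
    ∃ N : Euc k →L[ℝ] Euc k, ‖N‖ ≤ 1 ∧ N.comp S = ContinuousLinearMap.id ℝ _ ∧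
      S.comp N = ContinuousLinearMap.id ℝ _ := by
  have hinj : Function.Injective S := by
    intro v w h
    have h0 : S (v - w) = 0 := by rw [map_sub, h, sub_self]
    have := hS (v - w)
    rw [h0, inner_zero_left] at this
    have : ‖v - w‖ = 0 := by nlinarith [norm_nonneg (v - w)]
    rwa [norm_eq_zero, sub_eq_zero] at this
  have hbij : Function.Bijective S :=
    ⟨hinj, (LinearMap.injective_iff_surjective (f := (S : Euc k →ₗ[ℝ] Euc k))).1 hinj⟩
  let eqv : Euc k ≃ₗ[ℝ] Euc k := LinearEquiv.ofBijective (S : Euc k →ₗ[ℝ] Euc k) hbij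
  let N : Euc k →L[ℝ] Euc k := (eqv.toContinuousLinearEquiv).symm.toContinuousLinearMap
  have hNS : ∀ v, N (S v) = v := fun v => eqv.symm_apply_apply v
  have hSN : ∀ w, S (N w) = w := fun w => eqv.apply_symm_apply w
  refine ⟨N, ?_, ContinuousLinearMap.ext hNS, ContinuousLinearMap.ext hSN⟩
  refine ContinuousLinearMap.opNorm_le_bound _ zero_le_one (fun w => ?_)
  rw [one_mul]
  have h1 : ‖N w‖ ^ 2 ≤ ⟪S (N w), N w⟫ := hS (N w)
  rw [hSN w] at h1
  have h2 : ⟪w, N w⟫ ≤ ‖w‖ * ‖N w‖ := real_inner_le_norm w (N w)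
  nlinarith [norm_nonneg (N w), norm_nonneg w]

open ContinuousLinearMap in
lemma projCLM_range_eq (A : EuclideanSpace ℝ (Fin k) →L[ℝ] Euc n)
    (N : EuclideanSpace ℝ (Fin k) →L[ℝ] EuclideanSpace ℝ (Fin k))
    (hN2 : ((adjoint A).comp A).comp N = ContinuousLinearMap.id ℝ _) :
    projCLM (LinearMap.range (A : EuclideanSpace ℝ (Fin k) →ₗ[ℝ] Euc n)) = A.comp (N.comp (adjoint A)) := by
  refine ContinuousLinearMap.ext fun v => ?_
  show (LinearMap.range (A : EuclideanSpace ℝ (Fin k) →ₗ[ℝ] Euc n)).starProjection v = A (N (adjoint A v))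
  refine Submodule.eq_starProjection_of_mem_orthogonal (LinearMap.mem_range_self _ _) ?_
  rw [Submodule.mem_orthogonal]
  rintro u ⟨w, rfl⟩
  have hz : adjoint A (v - A (N (adjoint A v))) = 0 := by
    rw [map_sub]
    have : adjoint A (A (N (adjoint A v))) = adjoint A v := by
      have := congrArg (fun (T : EuclideanSpace ℝ (Fin k) →L[ℝ] EuclideanSpace ℝ (Fin k)) =>
        T (adjoint A v)) hN2
      simpa using this
    rw [this, sub_self]
  calc ⟪A w, v - A (N (adjoint A v))⟫
      = ⟪adjoint A (v - A (N (adjoint A v))), w⟫ := by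
        rw [adjoint_inner_left, real_inner_comm]
    _ = 0 := by rw [hz, inner_zero_left]


open ContinuousLinearMap in
lemma inner_adj_self (A : EuclideanSpace ℝ (Fin k) →L[ℝ] Euc n) (v : EuclideanSpace ℝ (Fin k)) :
    ⟪((adjoint A).comp A) v, v⟫ = ‖A v‖ ^ 2 := by
  rw [ContinuousLinearMap.comp_apply, adjoint_inner_left, real_inner_self_eq_norm_sq]

open ContinuousLinearMap in
lemma proj_diff_bound (A B : EuclideanSpace ℝ (Fin k) →L[ℝ] Euc n)
    (hA : ∀ v, ‖v‖ ≤ ‖A v‖) (hB : ∀ v, ‖v‖ ≤ ‖B v‖)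
    (M : ℝ) (hMA : ‖A‖ ≤ M) (hMB : ‖B‖ ≤ M) :
    ‖projCLM (LinearMap.range (A : EuclideanSpace ℝ (Fin k) →ₗ[ℝ] Euc n)) - projCLM (LinearMap.range (B : EuclideanSpace ℝ (Fin k) →ₗ[ℝ] Euc n))‖
      ≤ (2 * M + 2 * M ^ 3) * ‖A - B‖ := by
  have hM0 : (0 : ℝ) ≤ M := le_trans (norm_nonneg A) hMA
  have hSA : ∀ v, ‖v‖ ^ 2 ≤ ⟪((adjoint A).comp A) v, v⟫ := fun v => by
    rw [inner_adj_self]; exact pow_le_pow_left₀ (norm_nonneg v) (hA v) 2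
  have hSB : ∀ v, ‖v‖ ^ 2 ≤ ⟪((adjoint B).comp B) v, v⟫ := fun v => by
    rw [inner_adj_self]; exact pow_le_pow_left₀ (norm_nonneg v) (hB v) 2
  obtain ⟨NA, hNA1, hNA2, hNA3⟩ := exists_inv _ hSA
  obtain ⟨NB, hNB1, hNB2, hNB3⟩ := exists_inv _ hSB
  rw [projCLM_range_eq A NA hNA3, projCLM_range_eq B NB hNB3]
  -- pointwise identities
  have pNA2 : ∀ w, NA (adjoint A (A w)) = w := fun w =>
    congrArg (fun T : EuclideanSpace ℝ (Fin k) →L[ℝ] _ => T w) hNA2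
  have pNA3 : ∀ w, adjoint A (A (NA w)) = w := fun w =>
    congrArg (fun T : EuclideanSpace ℝ (Fin k) →L[ℝ] _ => T w) hNA3
  have pNB3 : ∀ w, adjoint B (B (NB w)) = w := fun w =>
    congrArg (fun T : EuclideanSpace ℝ (Fin k) →L[ℝ] _ => T w) hNB3
  set SA := (adjoint A).comp A with hSAdef
  set SB := (adjoint B).comp B with hSBdef
  have key : A.comp (NA.comp (adjoint A)) - B.comp (NB.comp (adjoint B))
      = (A - B).comp (NA.comp (adjoint A))
        + B.comp (((NA.comp (SB - SA)).comp NB).comp (adjoint A))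
        + (B.comp NB).comp (adjoint A - adjoint B) := by
    refine ContinuousLinearMap.ext fun v => ?_
    simp only [ContinuousLinearMap.comp_apply, ContinuousLinearMap.sub_apply,
      ContinuousLinearMap.add_apply, map_sub, hSAdef, hSBdef]
    rw [pNB3 (adjoint A v), pNA2 (NB (adjoint A v))]
    abel
  rw [key]
  have hadjA : ‖adjoint A‖ ≤ M := by rw [LinearIsometryEquiv.norm_map]; exact hMA
  have hadjB : ‖adjoint B‖ ≤ M := by rw [LinearIsometryEquiv.norm_map]; exact hMB
  have hadjsub : ‖adjoint A - adjoint B‖ = ‖A - B‖ := by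
    rw [← map_sub (adjoint (𝕜 := ℝ) (E := EuclideanSpace ℝ (Fin k)) (F := Euc n)),
      LinearIsometryEquiv.norm_map]
  have hSdiff : ‖SB - SA‖ ≤ 2 * M * ‖A - B‖ := by
    have hid : SB - SA = (adjoint B).comp (B - A) + (adjoint B - adjoint A).comp A := by
      rw [hSAdef, hSBdef]
      refine ContinuousLinearMap.ext fun v => ?_
      simp only [ContinuousLinearMap.comp_apply, ContinuousLinearMap.sub_apply,
        ContinuousLinearMap.add_apply, map_sub]
      abel
    rw [hid]
    refine le_trans (norm_add_le _ _) ?_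
    have h1 : ‖(adjoint B).comp (B - A)‖ ≤ M * ‖A - B‖ := by
      refine le_trans (opNorm_comp_le _ _) ?_
      rw [norm_sub_rev]
      exact mul_le_mul_of_nonneg_right hadjB (norm_nonneg _)
    have h2 : ‖(adjoint B - adjoint A).comp A‖ ≤ M * ‖A - B‖ := by
      refine le_trans (opNorm_comp_le _ _) ?_
      have he : ‖adjoint B - adjoint A‖ = ‖A - B‖ := by rw [norm_sub_rev, hadjsub]
      rw [he]
      calc ‖A - B‖ * ‖A‖ ≤ ‖A - B‖ * M := mul_le_mul_of_nonneg_left hMA (norm_nonneg _)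
      _ = M * ‖A - B‖ := mul_comm _ _
    linarith
  refine le_trans (norm_add₃_le) ?_
  have hD0 : (0 : ℝ) ≤ ‖A - B‖ := norm_nonneg _
  have b1 : ‖(A - B).comp (NA.comp (adjoint A))‖ ≤ ‖A - B‖ * M := by
    refine le_trans (opNorm_comp_le _ _) ?_
    have : ‖NA.comp (adjoint A)‖ ≤ M := by
      refine le_trans (opNorm_comp_le _ _) ?_
      calc ‖NA‖ * ‖adjoint A‖ ≤ 1 * M :=
        mul_le_mul hNA1 hadjA (norm_nonneg _) zero_le_one
      _ = M := one_mul M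
    exact mul_le_mul_of_nonneg_left this hD0
  have b2 : ‖B.comp (((NA.comp (SB - SA)).comp NB).comp (adjoint A))‖
      ≤ M * ((2 * M * ‖A - B‖) * M) := by
    have hmid : ‖((NA.comp (SB - SA)).comp NB).comp (adjoint A)‖ ≤ (2 * M * ‖A - B‖) * M := by
      refine le_trans (opNorm_comp_le _ _) ?_
      have h3 : ‖(NA.comp (SB - SA)).comp NB‖ ≤ 2 * M * ‖A - B‖ := by
        refine le_trans (opNorm_comp_le _ _) ?_
        have h4 : ‖NA.comp (SB - SA)‖ ≤ 2 * M * ‖A - B‖ := by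
          refine le_trans (opNorm_comp_le _ _) ?_
          calc ‖NA‖ * ‖SB - SA‖ ≤ 1 * (2 * M * ‖A - B‖) :=
            mul_le_mul hNA1 hSdiff (norm_nonneg _) zero_le_one
          _ = 2 * M * ‖A - B‖ := one_mul _
        calc ‖NA.comp (SB - SA)‖ * ‖NB‖ ≤ (2 * M * ‖A - B‖) * 1 :=
          mul_le_mul h4 hNB1 (norm_nonneg _) (by positivity)
        _ = 2 * M * ‖A - B‖ := mul_one _
      exact mul_le_mul h3 hadjA (norm_nonneg _) (by positivity)
    refine le_trans (opNorm_comp_le _ _) ?_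
    exact mul_le_mul hMB hmid (norm_nonneg _) hM0
  have b3 : ‖(B.comp NB).comp (adjoint A - adjoint B)‖ ≤ M * ‖A - B‖ := by
    refine le_trans (opNorm_comp_le _ _) ?_
    rw [hadjsub]
    have : ‖B.comp NB‖ ≤ M := by
      refine le_trans (opNorm_comp_le _ _) ?_
      calc ‖B‖ * ‖NB‖ ≤ M * 1 := mul_le_mul hMB hNB1 (norm_nonneg _) hM0
      _ = M := mul_one M
    exact mul_le_mul_of_nonneg_right this hD0
  have final : ‖A - B‖ * M + M * ((2 * M * ‖A - B‖) * M) + M * ‖A - B‖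
      = (2 * M + 2 * M ^ 3) * ‖A - B‖ := by ring
  linarith



-- ### continuous linear map versions of the embeddings
def embACLM (n k : ℕ) : EuclideanSpace ℝ (Fin k) →L[ℝ] Euc n :=
  LinearMap.toContinuousLinearMap (embA n k)

def embBCLM (n k : ℕ) (hkn : k ≤ n) : EuclideanSpace ℝ (Fin (n - k)) →L[ℝ] Euc n :=
  LinearMap.toContinuousLinearMap (embB n k hkn)

lemma embACLM_apply (u : EuclideanSpace ℝ (Fin k)) : embACLM n k u = embA n k u := rfl

lemma embBCLM_apply (hkn : k ≤ n) (a : EuclideanSpace ℝ (Fin (n - k))) :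
    embBCLM n k hkn a = embB n k hkn a := rfl

lemma graphMap_eq (hkn : k ≤ n) (f : EuclideanSpace ℝ (Fin k) → EuclideanSpace ℝ (Fin (n - k)))
    (x : EuclideanSpace ℝ (Fin k)) :
    graphMap n k hkn f x = embA n k x + embB n k hkn (f x) := by
  ext j
  by_cases h : (j : ℕ) < k <;> simp [graphMap, embA, embB, h]

lemma norm_graph_apply_sq (hkn : k ≤ n)
    (D : EuclideanSpace ℝ (Fin k) →L[ℝ] EuclideanSpace ℝ (Fin (n - k)))
    (v : EuclideanSpace ℝ (Fin k)) :
    ‖(embACLM n k + (embBCLM n k hkn).comp D) v‖ ^ 2 = ‖v‖ ^ 2 + ‖D v‖ ^ 2 := by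
  have h : (embACLM n k + (embBCLM n k hkn).comp D) v
      = embA n k v + embB n k hkn (D v) := by
    simp [ContinuousLinearMap.add_apply, ContinuousLinearMap.comp_apply,
      embACLM_apply, embBCLM_apply]
  rw [h, ← real_inner_self_eq_norm_sq, inner_emb_add hkn,
    real_inner_self_eq_norm_sq, real_inner_self_eq_norm_sq]

lemma norm_le_graph_apply (hkn : k ≤ n)
    (D : EuclideanSpace ℝ (Fin k) →L[ℝ] EuclideanSpace ℝ (Fin (n - k)))
    (v : EuclideanSpace ℝ (Fin k)) :
    ‖v‖ ≤ ‖(embACLM n k + (embBCLM n k hkn).comp D) v‖ := by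
  have h := norm_graph_apply_sq hkn D v
  nlinarith [norm_nonneg v, norm_nonneg ((embACLM n k + (embBCLM n k hkn).comp D) v),
    sq_nonneg ‖D v‖]

lemma projCLM_orthogonal {n : ℕ} (L : Submodule ℝ (Euc n)) :
    projCLM Lᗮ = ContinuousLinearMap.id ℝ (Euc n) - projCLM L := by
  refine ContinuousLinearMap.ext fun v => ?_
  show Lᗮ.starProjection v = v - L.starProjection v
  exact Submodule.starProjection_orthogonal_val v

open Bornology

section Model
variable {E : Type*} [NormedAddCommGroup E] [NormedSpace ℝ E] [FiniteDimensional ℝ E]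
  [MeasurableSpace E] [BorelSpace E] {d : ℕ}

def modelEquiv (hE : Module.finrank ℝ E = d) : (Fin d → ℝ) ≃L[ℝ] E :=
  LinearEquiv.toContinuousLinearEquiv
    (((Module.finBasis ℝ E).reindex (finCongr hE)).equivFun.symm)

lemma pi_haus : (μH[(d : ℝ)] : Measure (Fin d → ℝ)) = volume := by
  have : ((d : ℝ)) = ((Fintype.card (Fin d) : ℕ) : ℝ) := by simp
  rw [this, hausdorffMeasure_pi_real]

lemma image_model (hE : Module.finrank ℝ E = d) (s : Set E) :
    s = (modelEquiv hE) '' ((modelEquiv hE) ⁻¹' s) := by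
  rw [Set.image_preimage_eq _ (modelEquiv hE).surjective]

lemma haus_le_model (hE : Module.finrank ℝ E = d) (s : Set E) :
    μH[(d : ℝ)] s ≤ (‖((modelEquiv hE : (Fin d → ℝ) →L[ℝ] E))‖₊ : ℝ≥0∞) ^ (d : ℝ)
      * volume ((modelEquiv hE) ⁻¹' s) := by
  conv_lhs => rw [image_model hE s]
  rw [← pi_haus]
  exact ((modelEquiv hE : (Fin d → ℝ) →L[ℝ] E).lipschitz).hausdorffMeasure_image_le
    (by positivity) _

lemma haus_ne_top (hE : Module.finrank ℝ E = d) {s : Set E} (hb : IsBounded s) :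
    μH[(d : ℝ)] s ≠ ⊤ := by
  refine ne_top_of_le_ne_top ?_ (haus_le_model hE s)
  refine ENNReal.mul_ne_top (ENNReal.rpow_ne_top_of_nonneg (by positivity) ENNReal.coe_ne_top) ?_
  have hb2 : IsBounded ((modelEquiv hE) ⁻¹' s) :=
    ((modelEquiv hE).antilipschitz).isBounded_preimage hb
  obtain ⟨r, hr⟩ := hb2.subset_closedBall 0
  exact ne_top_of_le_ne_top (measure_closedBall_lt_top).ne (measure_mono hr)

lemma haus_zero_of_interior_empty (hE : Module.finrank ℝ E = d) {s : Set E}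
    (hconv : Convex ℝ s) (hcl : IsClosed s) (hint : interior s = ∅) :
    μH[(d : ℝ)] s = 0 := by
  have hpre : volume ((modelEquiv hE) ⁻¹' s) = 0 := by
    set ψ := modelEquiv hE
    have hconv' : Convex ℝ (ψ ⁻¹' s) := hconv.linear_preimage (ψ : (Fin d → ℝ) →ₗ[ℝ] E)
    have hcl' : IsClosed (ψ ⁻¹' s) := hcl.preimage ψ.continuous
    have hint' : interior (ψ ⁻¹' s) = ∅ := by
      rw [show ⇑ψ ⁻¹' s = ⇑ψ.toHomeomorph ⁻¹' s from rfl,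
        ← Homeomorph.preimage_interior, hint, Set.preimage_empty]
    have hfr : frontier (ψ ⁻¹' s) = ψ ⁻¹' s := by
      rw [frontier, hint', hcl'.closure_eq, Set.diff_empty]
    rw [← hfr]
    exact hconv'.addHaar_frontier volume
  refine le_antisymm ?_ zero_le
  refine le_trans (haus_le_model hE s) ?_
  rw [hpre, mul_zero]

lemma exists_ball_subset (hE : Module.finrank ℝ E = d) {s : Set E}
    (hconv : Convex ℝ s) (hcl : IsClosed s) (hne0 : μH[(d : ℝ)] s ≠ 0) :
    ∃ x ρ, 0 < ρ ∧ Metric.ball x ρ ⊆ s := by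
  have hint : (interior s).Nonempty := by
    rcases Set.eq_empty_or_nonempty (interior s) with h | h
    · exact absurd (haus_zero_of_interior_empty hE hconv hcl h) hne0
    · exact h
  obtain ⟨x, hx⟩ := hint
  obtain ⟨ρ, hρ, hball⟩ := Metric.isOpen_iff.1 isOpen_interior x hx
  exact ⟨x, ρ, hρ, hball.trans interior_subset⟩

end Model

section Shrink
variable {E : Type*} [NormedAddCommGroup E] [NormedSpace ℝ E]

lemma exists_near_norm (f : E →L[ℝ] ℝ) {η : ℝ} (hη : 0 < η) :
    ∃ w : E, ‖w‖ ≤ 1 ∧ ‖f‖ - η ≤ f w := by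
  by_contra h
  push_neg at h
  have hb : ∀ w : E, ‖w‖ ≤ 1 → f w < ‖f‖ - η := fun w hw => h w hw
  have h0 : (0 : ℝ) < ‖f‖ - η := by
    have := hb 0 (by simp)
    simpa using this
  have : ‖f‖ ≤ ‖f‖ - η := by
    refine f.opNorm_le_bound (le_of_lt h0) (fun w => ?_)
    rcases eq_or_ne w 0 with rfl | hw
    · simp
    · have hnw : 0 < ‖w‖ := norm_pos_iff.2 hw
      have h1 : f (‖w‖⁻¹ • w) < ‖f‖ - η := hb _ (by
        rw [norm_smul, norm_inv, norm_norm, inv_mul_cancel₀ hnw.ne'])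
      have h2 : f (-(‖w‖⁻¹ • w)) < ‖f‖ - η := hb _ (by
        rw [norm_neg, norm_smul, norm_inv, norm_norm, inv_mul_cancel₀ hnw.ne'])
      rw [map_neg] at h2
      rw [_root_.map_smul, smul_eq_mul] at h1 h2
      have hh : ‖w‖ * (‖w‖⁻¹ * f w) = f w := by field_simp
      have h3 : |f w| ≤ (‖f‖ - η) * ‖w‖ := by
        rw [abs_le]
        constructor
        · nlinarith [mul_lt_mul_of_pos_left h2 hnw]
        · nlinarith [mul_lt_mul_of_pos_left h1 hnw]
      calc ‖f w‖ = |f w| := rfl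
      _ ≤ (‖f‖ - η) * ‖w‖ := h3
  linarith

/-- If `A` contains a ball `B(x, ρ)`, `B` is closed convex, and `A ⊆ B + εB̄`, then the
`(1 - ε/ρ)`-shrinking of `A` about `x` is contained in `B`. -/
lemma shrink_subset {A B : Set E} {x : E} {ρ ε : ℝ} (hρ : 0 < ρ) (hε : 0 < ε) (hερ : ε ≤ ρ)
    (hball : Metric.ball x ρ ⊆ A)
    (hBconv : Convex ℝ B) (hBclosed : IsClosed B)
    (hAB : A ⊆ Metric.cthickening ε B) {a : E} (ha : a ∈ A) :
    x + (1 - ε / ρ) • (a - x) ∈ B := by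
  have hBne : B.Nonempty := by
    rcases Set.eq_empty_or_nonempty B with rfl | h
    · exfalso
      have hxA : x ∈ A := hball (Metric.mem_ball_self hρ)
      have := hAB hxA
      simp [Metric.cthickening_empty] at this
    · exact h
  set θ := ε / ρ with hθdef
  have hθ0 : 0 < θ := div_pos hε hρ
  have hθ1 : θ ≤ 1 := (div_le_one hρ).2 hερ
  set z := x + (1 - θ) • (a - x) with hz
  by_contra hzB
  obtain ⟨f, u, hfB, hfz⟩ := geometric_hahn_banach_closed_point hBconv hBclosed hzB
  -- every point of A has value ≤ u + ‖f‖ * (ε + η)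
  have hAbound : ∀ η > 0, ∀ a' ∈ A, f a' ≤ u + ‖f‖ * (ε + η) := by
    intro η hη a' ha'
    have h1 : infDist a' B ≤ ε :=
      ENNReal.toReal_le_of_le_ofReal (le_of_lt hε) ((Metric.mem_cthickening_iff).1 (hAB ha'))
    obtain ⟨b, hbB, hab⟩ := (infDist_lt_iff hBne).1 (lt_of_le_of_lt h1 (lt_add_of_pos_right ε hη))
    have h2 : f a' = f b + f (a' - b) := by rw [map_sub]; ring
    have h3 : f (a' - b) ≤ ‖f‖ * (ε + η) := by
      calc f (a' - b) ≤ |f (a' - b)| := le_abs_self _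
      _ ≤ ‖f‖ * ‖a' - b‖ := f.le_opNorm _
      _ ≤ ‖f‖ * (ε + η) := by
          refine mul_le_mul_of_nonneg_left ?_ (norm_nonneg f)
          rw [← dist_eq_norm]
          exact le_of_lt hab
    linarith [hfB b hbB]
  -- combined estimate for every small η
  have hkey : ∀ η, 0 < η → η < ρ → f z ≤ u + (‖f‖ * (ε + η) - θ * ((ρ - η) * (‖f‖ - η))) := by
    intro η hη hηρ
    obtain ⟨w₀, hw₀1, hw₀2⟩ := exists_near_norm f hη
    have hp : x + (ρ - η) • w₀ ∈ A := by
      refine hball ?_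
      rw [Metric.mem_ball, dist_eq_norm]
      have : x + (ρ - η) • w₀ - x = (ρ - η) • w₀ := by abel
      rw [this, norm_smul, Real.norm_eq_abs, abs_of_pos (by linarith)]
      nlinarith [norm_nonneg w₀]
    have hfp := hAbound η hη _ hp
    rw [map_add, _root_.map_smul, smul_eq_mul] at hfp
    have hfx : f x ≤ u + ‖f‖ * (ε + η) - (ρ - η) * (‖f‖ - η) := by
      nlinarith [hw₀2]
    have hfa := hAbound η hη a ha
    have hzval : f z = (1 - (1 - θ)) * f x + (1 - θ) * f a := by
      rw [hz, map_add, _root_.map_smul, map_sub, smul_eq_mul]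
      ring
    rw [hzval]
    have h1θ : 0 ≤ 1 - θ := by linarith
    nlinarith [hfa, hfx]
  -- let η → 0
  have hlim : Tendsto (fun η : ℝ => u + (‖f‖ * (ε + η) - θ * ((ρ - η) * (‖f‖ - η))))
      (𝓝[>] (0 : ℝ)) (𝓝 (u + (‖f‖ * ε - θ * (ρ * ‖f‖)))) := by
    have hc : Continuous (fun η : ℝ => u + (‖f‖ * (ε + η) - θ * ((ρ - η) * (‖f‖ - η)))) := by
      continuity
    have := hc.tendsto 0
    simp only [add_zero, sub_zero, mul_zero] at this
    exact this.mono_left nhdsWithin_le_nhds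
  have hfz_le : f z ≤ u + (‖f‖ * ε - θ * (ρ * ‖f‖)) := by
    refine ge_of_tendsto hlim ?_
    filter_upwards [Ioo_mem_nhdsGT_of_mem (by constructor <;> linarith : (0:ℝ) ∈ Set.Ico 0 ρ)]
      with η hη
    exact hkey η hη.1 hη.2
  have : θ * (ρ * ‖f‖) = ε * ‖f‖ := by
    rw [hθdef]; field_simp
  rw [this] at hfz_le
  have : f z ≤ u := by linarith
  linarith

end Shrink
section Proj
variable {n d : ℕ}

lemma projCLM_apply_mem (L : Submodule ℝ (Euc n)) (v : Euc n) : projCLM L v ∈ L :=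
  (L.orthogonalProjectionOnto v).2

lemma projCLM_apply_of_mem {L : Submodule ℝ (Euc n)} {u : Euc n} (hu : u ∈ L) :
    projCLM L u = u := by
  show (L.orthogonalProjectionOnto u : Euc n) = u
  rw [show u = ((⟨u, hu⟩ : ↥L) : Euc n) from rfl, Submodule.orthogonalProjectionOnto_mem_subspace_eq_self]

lemma projCLM_norm_apply_le (L : Submodule ℝ (Euc n)) (v : Euc n) : ‖projCLM L v‖ ≤ ‖v‖ := by
  have h0 : ⟪projCLM L v, v - projCLM L v⟫ = 0 := by
    rw [real_inner_comm]
    exact Submodule.starProjection_inner_eq_zero v _ (projCLM_apply_mem L v)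
  have h1 : ‖v‖ ^ 2 = ‖projCLM L v‖ ^ 2 + ‖v - projCLM L v‖ ^ 2 := by
    have h2 : v = projCLM L v + (v - projCLM L v) := by abel
    calc ‖v‖ ^ 2 = ‖projCLM L v + (v - projCLM L v)‖ ^ 2 := by rw [← h2]
    _ = ‖projCLM L v‖ ^ 2 + 2 * ⟪projCLM L v, v - projCLM L v⟫ + ‖v - projCLM L v‖ ^ 2 := by
        rw [← norm_add_sq_real]
    _ = ‖projCLM L v‖ ^ 2 + ‖v - projCLM L v‖ ^ 2 := by rw [h0]; ring
  nlinarith [norm_nonneg v, norm_nonneg (projCLM L v), sq_nonneg ‖v - projCLM L v‖]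

lemma projCLM_lipschitz (L : Submodule ℝ (Euc n)) : LipschitzWith 1 ⇑(projCLM L) := by
  refine LipschitzWith.of_dist_le_mul (fun a b => ?_)
  rw [NNReal.coe_one, one_mul, dist_eq_norm, dist_eq_norm, ← map_sub]
  exact projCLM_norm_apply_le L (a - b)

lemma val_image_preimage {L : Submodule ℝ (Euc n)} {s : Set (Euc n)} (hs : s ⊆ L) :
    Subtype.val '' ((Subtype.val : ↥L → Euc n) ⁻¹' s) = s := by
  refine Set.image_preimage_eq_of_subset ?_
  rw [Subtype.range_coe]
  exact hs

lemma nu_val {L : Submodule ℝ (Euc n)} (s : Set ↥L) :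
    μH[(d : ℝ)] (Subtype.val '' s) = μH[(d : ℝ)] s :=
  (isometry_subtype_coe).hausdorffMeasure_image (Or.inl (by positivity)) s

lemma nu_eq_sub {L : Submodule ℝ (Euc n)} {s : Set (Euc n)} (hs : s ⊆ L) :
    μH[(d : ℝ)] s = μH[(d : ℝ)] ((Subtype.val : ↥L → Euc n) ⁻¹' s) := by
  conv_lhs => rw [← val_image_preimage hs]
  rw [nu_val]

lemma nu_ne_top {L : Submodule ℝ (Euc n)} (hL : Module.finrank ℝ ↥L = d) {s : Set (Euc n)}
    (hs : s ⊆ L) (hb : Bornology.IsBounded s) : μH[(d : ℝ)] s ≠ ⊤ := by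
  rw [nu_eq_sub hs]
  exact haus_ne_top hL ((isometry_subtype_coe).antilipschitz.isBounded_preimage hb)

lemma preimage_cthickening (L : Submodule ℝ (Euc n)) {s : Set (Euc n)} (hs : s ⊆ L) (r : ℝ) :
    (Subtype.val : ↥L → Euc n) ⁻¹' (Metric.cthickening r s)
      = Metric.cthickening r ((Subtype.val : ↥L → Euc n) ⁻¹' s) := by
  ext u
  rw [Set.mem_preimage, Metric.mem_cthickening_iff, Metric.mem_cthickening_iff]
  have : infEDist u ((Subtype.val : ↥L → Euc n) ⁻¹' s)
      = infEDist (u : Euc n) s := by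
    conv_rhs => rw [← val_image_preimage hs]
    exact (Metric.infEDist_image isometry_subtype_coe).symm
  rw [this]

end Proj
section Main
variable {n d : ℕ} {X : Type*} [PseudoMetricSpace X]

lemma measure_proj_continuousOn {K : Set X}
    (L : X → Submodule ℝ (Euc n))
    (hdim : ∀ w ∈ K, Module.finrank ℝ ↥(L w) = d)
    (hcont : ContinuousOn (fun w => projCLM (L w)) K)
    {C : Set (Euc n)} (hCcomp : IsCompact C) (hCconv : Convex ℝ C) :
    ContinuousOn (fun w => (μH[(d : ℝ)] (⇑(projCLM (L w)) '' C)).toReal) K := by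
  rcases C.eq_empty_or_nonempty with rfl | hCne
  · simp only [Set.image_empty]
    exact continuousOn_const
  obtain ⟨R, hR⟩ := hCcomp.isBounded.subset_closedBall 0
  have hR0 : 0 ≤ R := by
    obtain ⟨c, hc⟩ := hCne
    have h := hR hc
    rw [Metric.mem_closedBall, dist_zero_right] at h
    exact le_trans (norm_nonneg c) h
  intro w₀ hw₀
  set P : X → (Euc n →L[ℝ] Euc n) := fun w => projCLM (L w) with hPdef
  set S : X → Set (Euc n) := fun w => ⇑(P w) '' C with hSdef
  have hSsub : ∀ w, S w ⊆ (L w : Set (Euc n)) := by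
    rintro w v ⟨c, _, rfl⟩
    exact projCLM_apply_mem _ _
  have hCbd : ∀ c ∈ C, ‖c‖ ≤ R := by
    intro c hc
    have h := hR hc
    rwa [Metric.mem_closedBall, dist_zero_right] at h
  have hScomp : ∀ w, IsCompact (S w) := fun w => hCcomp.image (P w).continuous
  have hSconv : ∀ w, Convex ℝ (S w) := fun w =>
    hCconv.linear_image ((P w) : Euc n →ₗ[ℝ] Euc n)
  set A : X → Set (Euc n) := fun w => ⇑(P w₀) '' (S w) with hAdef
  have hA0 : A w₀ = S w₀ := by
    refine Set.Subset.antisymm ?_ ?_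
    · rintro v ⟨u, hu, rfl⟩
      rwa [projCLM_apply_of_mem (hSsub w₀ hu)]
    · intro v hv
      exact ⟨v, hv, projCLM_apply_of_mem (hSsub w₀ hv)⟩
  have hAsub : ∀ w, A w ⊆ (L w₀ : Set (Euc n)) := by
    rintro w v ⟨u, _, rfl⟩
    exact projCLM_apply_mem _ _
  have hAcomp : ∀ w, IsCompact (A w) := fun w => (hScomp w).image (P w₀).continuous
  have hAconv : ∀ w, Convex ℝ (A w) := fun w =>
    (hSconv w).linear_image ((P w₀) : Euc n →ₗ[ℝ] Euc n)
  have hd₀ : Module.finrank ℝ ↥(L w₀) = d := hdim w₀ hw₀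
  set s₀ : Set ↥(L w₀) := (Subtype.val : ↥(L w₀) → Euc n) ⁻¹' (S w₀) with hs₀def
  set t : X → Set ↥(L w₀) := fun w => (Subtype.val : ↥(L w₀) → Euc n) ⁻¹' (A w) with htdef
  have hνA : ∀ w, μH[(d : ℝ)] (A w) = μH[(d : ℝ)] (t w) := fun w => nu_eq_sub (hAsub w)
  have hν₀ : μH[(d : ℝ)] (S w₀) = μH[(d : ℝ)] s₀ := nu_eq_sub (hSsub w₀)
  have hfinS : ∀ w ∈ K, μH[(d : ℝ)] (S w) ≠ ⊤ := fun w hw =>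
    nu_ne_top (hdim w hw) (hSsub w) (hScomp w).isBounded
  have hs₀closed : IsClosed s₀ := ((hScomp w₀).isClosed).preimage continuous_subtype_val
  have hs₀bdd : Bornology.IsBounded s₀ :=
    (isometry_subtype_coe).antilipschitz.isBounded_preimage (hScomp w₀).isBounded
  have hμ₀fin : ∀ r : ℝ, μH[(d : ℝ)] (Metric.cthickening r s₀) ≠ ⊤ := fun r =>
    haus_ne_top hd₀ hs₀bdd.cthickening
  have htend : Tendsto (fun r => μH[(d : ℝ)] (Metric.cthickening r s₀)) (𝓝 0)
      (𝓝 (μH[(d : ℝ)] s₀)) :=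
    tendsto_measure_cthickening_of_isClosed ⟨1, one_pos, hμ₀fin 1⟩ hs₀closed
  set V₀ : ℝ := (μH[(d : ℝ)] (S w₀)).toReal with hV₀def
  have hfin₀ : μH[(d : ℝ)] s₀ ≠ ⊤ := by rw [← hν₀]; exact hfinS w₀ hw₀
  have htendR : Tendsto (fun r => (μH[(d : ℝ)] (Metric.cthickening r s₀)).toReal)
      (𝓝[>] (0:ℝ)) (𝓝 V₀) := by
    have h1 : Tendsto (fun r => (μH[(d : ℝ)] (Metric.cthickening r s₀)).toReal) (𝓝 0)
        (𝓝 ((μH[(d : ℝ)] s₀).toReal)) := (ENNReal.tendsto_toReal hfin₀).comp htend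
    rw [hV₀def, hν₀]
    exact h1.mono_left nhdsWithin_le_nhds
  -- the key upper estimate
  have hupper : ∀ w ∈ K, ∀ τ' τ : ℝ, 0 < τ' → τ' < 1 → 0 < τ →
      dist (P w) (P w₀) < τ' → dist (P w) (P w₀) * R ≤ τ →
      (μH[(d : ℝ)] (S w)).toReal
        ≤ ((1 - τ')⁻¹) ^ (d:ℝ) * (μH[(d : ℝ)] (Metric.cthickening τ s₀)).toReal := by
    intro w hw τ' τ hτ'0 hτ'1 hτ0 hδτ' hδR
    set δ := dist (P w) (P w₀) with hδdef
    have hδ0 : 0 ≤ δ := dist_nonneg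
    have h1τ : (0:ℝ) < 1 - τ' := by linarith
    have hptw : ∀ z ∈ L w, ‖P w₀ z - z‖ ≤ δ * ‖z‖ := by
      intro z hz
      have h1 : P w z = z := projCLM_apply_of_mem hz
      calc ‖P w₀ z - z‖ = ‖(P w₀ - P w) z‖ := by rw [ContinuousLinearMap.sub_apply, h1]
      _ ≤ ‖P w₀ - P w‖ * ‖z‖ := (P w₀ - P w).le_opNorm z
      _ ≤ δ * ‖z‖ := by
          refine mul_le_mul_of_nonneg_right ?_ (norm_nonneg z)
          rw [hδdef, dist_eq_norm, norm_sub_rev]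
    set K₁ : ℝ≥0 := ((1 - τ')⁻¹).toNNReal with hK₁def
    have hK₁coe : (K₁ : ℝ) = (1 - τ')⁻¹ := Real.coe_toNNReal _ (by positivity)
    set q : ↥(L w) → Euc n := fun u => P w₀ (u : Euc n) with hqdef
    have hAL : AntilipschitzWith K₁ q := by
      refine AntilipschitzWith.of_le_mul_dist (fun u v => ?_)
      have hz : ((u : Euc n) - v) ∈ L w := sub_mem u.2 v.2
      have h1 := hptw _ hz
      have h2 : dist (q u) (q v) = ‖P w₀ ((u : Euc n) - v)‖ := by
        rw [hqdef, dist_eq_norm, ← map_sub]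
      have h3 : dist u v = ‖(u : Euc n) - (v : Euc n)‖ := by
        rw [Subtype.dist_eq, dist_eq_norm]
      rw [h2, h3, hK₁coe]
      set z := (u : Euc n) - (v : Euc n)
      have h4 : ‖z‖ - δ * ‖z‖ ≤ ‖P w₀ z‖ := by
        have h5 : ‖z‖ - ‖P w₀ z‖ ≤ ‖z - P w₀ z‖ := norm_sub_norm_le z (P w₀ z)
        have h6 : ‖z - P w₀ z‖ = ‖P w₀ z - z‖ := norm_sub_rev _ _
        linarith [h1]
      have h5 : (1 - τ') * ‖z‖ ≤ ‖P w₀ z‖ := by nlinarith [norm_nonneg z]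
      calc ‖z‖ = (1-τ')⁻¹ * ((1-τ') * ‖z‖) := by field_simp
      _ ≤ (1-τ')⁻¹ * ‖P w₀ z‖ := mul_le_mul_of_nonneg_left h5 (by positivity)
    have e1 : μH[(d:ℝ)] (S w) = μH[(d:ℝ)] ((Subtype.val : ↥(L w) → Euc n) ⁻¹' (S w)) :=
      nu_eq_sub (hSsub w)
    have e2 : q '' ((Subtype.val : ↥(L w) → Euc n) ⁻¹' (S w)) = A w := by
      rw [hqdef, hAdef]
      have h6 : (fun u : ↥(L w) => P w₀ (u:Euc n)) '' (Subtype.val ⁻¹' (S w))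
          = ⇑(P w₀) '' (Subtype.val '' ((Subtype.val : ↥(L w) → Euc n) ⁻¹' (S w))) := by
        rw [Set.image_image]
      rw [h6, val_image_preimage (hSsub w)]
    have e3 : μH[(d:ℝ)] ((Subtype.val : ↥(L w) → Euc n) ⁻¹' (S w))
        ≤ (K₁ : ℝ≥0∞) ^ (d:ℝ) * μH[(d:ℝ)] (A w) := by
      have h7 := hAL.le_hausdorffMeasure_image (by positivity : (0:ℝ) ≤ (d:ℝ))
        ((Subtype.val : ↥(L w) → Euc n) ⁻¹' (S w))
      rwa [e2] at h7
    have e4 : t w ⊆ Metric.cthickening τ s₀ := by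
      have hclose : A w ⊆ Metric.cthickening (δ * R) (S w₀) := by
        rintro v ⟨u, ⟨c, hc, rfl⟩, rfl⟩
        refine Metric.mem_cthickening_of_dist_le _ (P w₀ c) _ _ ⟨c, hc, rfl⟩ ?_
        have hidem : P w₀ c = P w₀ (P w₀ c) :=
          (projCLM_apply_of_mem (projCLM_apply_mem _ _)).symm
        rw [dist_eq_norm]
        calc ‖P w₀ (P w c) - P w₀ c‖ = ‖P w₀ (P w c) - P w₀ (P w₀ c)‖ := by rw [← hidem]
        _ = ‖P w₀ ((P w) c - (P w₀) c)‖ := by rw [← map_sub]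
        _ ≤ ‖(P w) c - (P w₀) c‖ := projCLM_norm_apply_le _ _
        _ = ‖(P w - P w₀) c‖ := by rw [ContinuousLinearMap.sub_apply]
        _ ≤ ‖P w - P w₀‖ * ‖c‖ := (P w - P w₀).le_opNorm c
        _ ≤ δ * R := by
            refine mul_le_mul ?_ (hCbd c hc) (norm_nonneg c) hδ0
            rw [hδdef, dist_eq_norm]
      intro u hu
      have h5 : (u : Euc n) ∈ Metric.cthickening (δ*R) (S w₀) := hclose hu
      have h8 : u ∈ Metric.cthickening (δ*R) s₀ := by
        rw [hs₀def, ← preimage_cthickening (L w₀) (hSsub w₀) (δ*R)]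
        exact h5
      exact Metric.cthickening_mono hδR s₀ h8
    have e5 : μH[(d:ℝ)] (A w) ≤ μH[(d:ℝ)] (Metric.cthickening τ s₀) := by
      rw [hνA w]
      exact measure_mono e4
    have e6 : μH[(d:ℝ)] (S w) ≤ (K₁:ℝ≥0∞)^(d:ℝ) * μH[(d:ℝ)] (Metric.cthickening τ s₀) := by
      rw [e1]
      exact le_trans e3 (mul_le_mul_right e5 _)
    have e7 : ((K₁:ℝ≥0∞)^(d:ℝ) * μH[(d:ℝ)] (Metric.cthickening τ s₀)) ≠ ⊤ :=
      ENNReal.mul_ne_top (ENNReal.rpow_ne_top_of_nonneg (by positivity) ENNReal.coe_ne_top)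
        (hμ₀fin τ)
    have e8 := ENNReal.toReal_mono e7 e6
    rw [ENNReal.toReal_mul, ← ENNReal.toReal_rpow, ENNReal.coe_toReal, hK₁coe] at e8
    exact e8
  -- the key lower estimate (nontrivial case)
  have hlower : ∀ x₁ : ↥(L w₀), ∀ ρ : ℝ, 0 < ρ → Metric.ball x₁ ρ ⊆ s₀ →
      ∀ w ∈ K, ∀ τ : ℝ, 0 < τ → τ ≤ ρ / 2 → dist (P w) (P w₀) * R ≤ τ →
      (1 - τ/ρ) ^ (d:ℝ) * V₀ ≤ (μH[(d : ℝ)] (S w)).toReal := by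
    intro x₁ ρ hρ hball w hw τ hτ0 hτρ2 hδR
    set δ := dist (P w) (P w₀) with hδdef
    have hδ0 : 0 ≤ δ := dist_nonneg
    set θ := τ / ρ with hθdef
    have hθ0 : 0 < θ := div_pos hτ0 hρ
    have hθhalf : θ ≤ 1/2 := by
      rw [hθdef, div_le_iff₀ hρ]
      linarith [hτρ2]
    have h1θ : (0:ℝ) < 1 - θ := by linarith
    have hclose₀ : S w₀ ⊆ Metric.cthickening (δ * R) (A w) := by
      rintro v ⟨c, hc, rfl⟩
      refine Metric.mem_cthickening_of_dist_le _ (P w₀ (P w c)) _ _ ⟨P w c, ⟨c, hc, rfl⟩, rfl⟩ ?_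
      have hidem : P w₀ c = P w₀ (P w₀ c) :=
        (projCLM_apply_of_mem (projCLM_apply_mem _ _)).symm
      rw [dist_comm, dist_eq_norm]
      calc ‖P w₀ (P w c) - P w₀ c‖ = ‖P w₀ (P w c) - P w₀ (P w₀ c)‖ := by rw [← hidem]
      _ = ‖P w₀ ((P w) c - (P w₀) c)‖ := by rw [← map_sub]
      _ ≤ ‖(P w) c - (P w₀) c‖ := projCLM_norm_apply_le _ _
      _ = ‖(P w - P w₀) c‖ := by rw [ContinuousLinearMap.sub_apply]
      _ ≤ ‖P w - P w₀‖ * ‖c‖ := (P w - P w₀).le_opNorm c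
      _ ≤ δ * R := by
          refine mul_le_mul ?_ (hCbd c hc) (norm_nonneg c) hδ0
          rw [hδdef, dist_eq_norm]
    have hsub : s₀ ⊆ Metric.cthickening τ (t w) := by
      intro u hu
      have h5 : (u : Euc n) ∈ Metric.cthickening (δ*R) (A w) := hclose₀ hu
      have h7 : u ∈ Metric.cthickening (δ*R) (t w) := by
        rw [htdef]
        simp only []
        rw [← preimage_cthickening (L w₀) (hAsub w) (δ*R)]
        exact h5
      exact Metric.cthickening_mono hδR _ h7
    have htconv : Convex ℝ (t w) := (hAconv w).linear_preimage ((L w₀).subtype)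
    have htclosed : IsClosed (t w) := ((hAcomp w).isClosed).preimage continuous_subtype_val
    have hshr : ∀ a ∈ s₀, x₁ + (1 - θ) • (a - x₁) ∈ t w := fun a ha =>
      shrink_subset hρ hτ0 (by linarith) hball htconv htclosed hsub ha
    have himg : ⇑(AffineMap.homothety x₁ (1 - θ)) '' s₀ ⊆ t w := by
      rintro v ⟨a, ha, rfl⟩
      have h8 := hshr a ha
      have h9 : (AffineMap.homothety x₁ (1-θ)) a = x₁ + (1-θ) • (a - x₁) := by
        rw [AffineMap.homothety_apply, vsub_eq_sub, vadd_eq_add]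
        abel
      rw [h9]
      exact h8
    have hmeas : μH[(d:ℝ)] (⇑(AffineMap.homothety x₁ (1-θ)) '' s₀)
        = ‖(1-θ)‖₊ ^ (d:ℝ) • μH[(d:ℝ)] s₀ :=
      hausdorffMeasure_homothety_image (by positivity) x₁ (ne_of_gt h1θ) s₀
    have h10 : ‖(1-θ)‖₊ ^ (d:ℝ) • μH[(d:ℝ)] s₀ ≤ μH[(d:ℝ)] (t w) := by
      rw [← hmeas]
      exact measure_mono himg
    have h11 : μH[(d:ℝ)] (A w) ≤ μH[(d:ℝ)] (S w) := by
      have h12 := (projCLM_lipschitz (L w₀)).hausdorffMeasure_image_le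
        (by positivity : (0:ℝ) ≤ (d:ℝ)) (S w)
      simpa [ENNReal.one_rpow] using h12
    have h12 : ‖(1-θ)‖₊ ^ (d:ℝ) • μH[(d:ℝ)] s₀ ≤ μH[(d:ℝ)] (S w) := by
      refine le_trans h10 ?_
      rw [← hνA w]
      exact h11
    have h13 := ENNReal.toReal_mono (hfinS w hw) h12
    rw [ENNReal.smul_def, smul_eq_mul, ENNReal.toReal_mul, ENNReal.coe_toReal,
      NNReal.coe_rpow, coe_nnnorm, Real.norm_eq_abs, abs_of_pos h1θ] at h13
    rw [hV₀def, hν₀]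
    exact h13
  -- conclusion
  rw [Metric.continuousWithinAt_iff]
  intro ε' hε'
  have hcw : ContinuousWithinAt (fun w => P w) K w₀ := hcont w₀ hw₀
  rw [Metric.continuousWithinAt_iff] at hcw
  have habs : ∀ x, dist ((μH[(d : ℝ)] (⇑(projCLM (L x)) '' C)).toReal)
      ((μH[(d : ℝ)] (⇑(projCLM (L w₀)) '' C)).toReal)
      = |(μH[(d:ℝ)] (S x)).toReal - V₀| := fun x => Real.dist_eq _ _
  by_cases hzero : V₀ = 0
  · have h1 : Tendsto (fun τ => (2:ℝ)^((d:ℕ):ℝ) * (μH[(d:ℝ)] (Metric.cthickening τ s₀)).toReal)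
        (𝓝[>] (0:ℝ)) (𝓝 ((2:ℝ)^((d:ℕ):ℝ) * V₀)) := htendR.const_mul _
    rw [hzero, mul_zero] at h1
    have h2 : ∀ᶠ τ in 𝓝[>] (0:ℝ),
        (2:ℝ)^((d:ℕ):ℝ) * (μH[(d:ℝ)] (Metric.cthickening τ s₀)).toReal < ε' :=
      h1.eventually_lt_const hε'
    obtain ⟨τ, hτlt, hτ0⟩ := (h2.and eventually_mem_nhdsWithin).exists
    rw [Set.mem_Ioi] at hτ0
    set δb := min (1/2 : ℝ) (τ / (R+1)) with hδbdef
    have hδb0 : 0 < δb := lt_min (by norm_num) (by positivity)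
    obtain ⟨δ₂, hδ₂0, hδ₂⟩ := hcw δb hδb0
    refine ⟨δ₂, hδ₂0, fun {x} hx hxd => ?_⟩
    have hdd := hδ₂ hx hxd
    have hd1 : dist (P x) (P w₀) < 1/2 := lt_of_lt_of_le hdd (min_le_left _ _)
    have hd2 : dist (P x) (P w₀) * R ≤ τ := by
      have h3 : dist (P x) (P w₀) ≤ τ/(R+1) := le_of_lt (lt_of_lt_of_le hdd (min_le_right _ _))
      calc dist (P x) (P w₀) * R ≤ (τ/(R+1)) * R := mul_le_mul_of_nonneg_right h3 hR0
      _ ≤ τ := by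
          rw [div_mul_eq_mul_div, div_le_iff₀ (by positivity)]
          nlinarith
    have hup := hupper x hx (1/2) τ (by norm_num) (by norm_num) hτ0 hd1 hd2
    have h4 : ((1 - (1/2:ℝ))⁻¹) = 2 := by norm_num
    rw [h4] at hup
    rw [habs x, hzero, sub_zero, abs_of_nonneg ENNReal.toReal_nonneg]
    exact lt_of_le_of_lt hup hτlt
  · have hV₀pos : 0 < V₀ := lt_of_le_of_ne ENNReal.toReal_nonneg (Ne.symm hzero)
    have hs₀ne : μH[(d:ℝ)] s₀ ≠ 0 := by
      rw [← hν₀]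
      intro h
      apply hzero
      rw [hV₀def, h, ENNReal.toReal_zero]
    have hs₀conv : Convex ℝ s₀ := (hSconv w₀).linear_preimage ((L w₀).subtype)
    obtain ⟨x₁, ρ, hρ, hball⟩ := exists_ball_subset hd₀ hs₀conv hs₀closed hs₀ne
    have ht1 : Tendsto (fun p : ℝ => ((1-p)⁻¹)^((d:ℕ):ℝ) * (V₀ + ε'/3)) (𝓝[>] (0:ℝ))
        (𝓝 (V₀ + ε'/3)) := by
      have hc1 : ContinuousAt (fun p : ℝ => ((1-p)⁻¹)^((d:ℕ):ℝ) * (V₀ + ε'/3)) 0 := by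
        have hbase : ContinuousAt (fun p : ℝ => (1-p)⁻¹) 0 :=
          ((continuous_const.sub continuous_id).continuousAt).inv₀ (by norm_num)
        have hpow : ContinuousAt (fun p : ℝ => ((1-p)⁻¹)^((d:ℕ):ℝ)) 0 := by
          refine hbase.rpow_const ?_
          right; positivity
        exact hpow.mul continuousAt_const
      have h5 := hc1.tendsto
      simp only [sub_zero, inv_one, Real.one_rpow, one_mul] at h5
      exact h5.mono_left nhdsWithin_le_nhds
    have hev1 : ∀ᶠ p in 𝓝[>] (0:ℝ), ((1-p)⁻¹)^((d:ℕ):ℝ) * (V₀ + ε'/3) < V₀ + ε'/2 :=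
      ht1.eventually_lt_const (by linarith)
    have hev1b : ∀ᶠ p in 𝓝[>] (0:ℝ), p < 1/2 :=
      eventually_nhdsWithin_of_eventually_nhds (eventually_lt_nhds (by norm_num))
    obtain ⟨τ', ⟨hτ'1, hτ'2⟩, hτ'mem⟩ := ((hev1.and hev1b).and eventually_mem_nhdsWithin).exists
    rw [Set.mem_Ioi] at hτ'mem
    have hev2 : ∀ᶠ τ in 𝓝[>] (0:ℝ),
        (μH[(d:ℝ)] (Metric.cthickening τ s₀)).toReal < V₀ + ε'/3 :=
      htendR.eventually_lt_const (by linarith)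
    have ht3 : Tendsto (fun τ : ℝ => (1-τ/ρ)^((d:ℕ):ℝ) * V₀) (𝓝[>] (0:ℝ)) (𝓝 V₀) := by
      have hc3 : ContinuousAt (fun τ : ℝ => (1-τ/ρ)^((d:ℕ):ℝ) * V₀) 0 := by
        have hbase : ContinuousAt (fun τ : ℝ => 1-τ/ρ) 0 :=
          (continuous_const.sub (continuous_id.div_const ρ)).continuousAt
        have hpow : ContinuousAt (fun τ : ℝ => (1-τ/ρ)^((d:ℕ):ℝ)) 0 := by
          refine hbase.rpow_const ?_
          right; positivity
        exact hpow.mul continuousAt_const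
      have h5 := hc3.tendsto
      simp only [zero_div, sub_zero, Real.one_rpow, one_mul] at h5
      exact h5.mono_left nhdsWithin_le_nhds
    have hev3 : ∀ᶠ τ in 𝓝[>] (0:ℝ), V₀ - ε'/2 < (1-τ/ρ)^((d:ℕ):ℝ) * V₀ :=
      ht3.eventually_const_lt (by linarith)
    have hev4 : ∀ᶠ τ in 𝓝[>] (0:ℝ), τ ≤ ρ/2 := by
      filter_upwards [eventually_nhdsWithin_of_eventually_nhds
        (eventually_lt_nhds (by positivity : (0:ℝ) < ρ/2))] with τ hτ
      exact le_of_lt hτ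
    obtain ⟨τ, ⟨⟨hτa, hτb⟩, hτc⟩, hτmem⟩ :=
      (((hev2.and hev3).and hev4).and eventually_mem_nhdsWithin).exists
    rw [Set.mem_Ioi] at hτmem
    set δb := min τ' (τ/(R+1)) with hδbdef
    have hδb0 : 0 < δb := lt_min hτ'mem (by positivity)
    obtain ⟨δ₂, hδ₂0, hδ₂⟩ := hcw δb hδb0
    refine ⟨δ₂, hδ₂0, fun {x} hx hxd => ?_⟩
    have hdd := hδ₂ hx hxd
    have hd1 : dist (P x) (P w₀) < τ' := lt_of_lt_of_le hdd (min_le_left _ _)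
    have hd2 : dist (P x) (P w₀) * R ≤ τ := by
      have h3 : dist (P x) (P w₀) ≤ τ/(R+1) := le_of_lt (lt_of_lt_of_le hdd (min_le_right _ _))
      calc dist (P x) (P w₀) * R ≤ (τ/(R+1)) * R := mul_le_mul_of_nonneg_right h3 hR0
      _ ≤ τ := by
          rw [div_mul_eq_mul_div, div_le_iff₀ (by positivity)]
          nlinarith
    have hup := hupper x hx τ' τ hτ'mem (by linarith) hτmem hd1 hd2
    have hlo := hlower x₁ ρ hρ hball x hx τ hτmem hτc hd2
    have hFup : (μH[(d:ℝ)] (S x)).toReal < V₀ + ε'/2 := by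
      calc (μH[(d:ℝ)] (S x)).toReal
          ≤ ((1-τ')⁻¹)^((d:ℕ):ℝ) * (μH[(d:ℝ)] (Metric.cthickening τ s₀)).toReal := hup
      _ ≤ ((1-τ')⁻¹)^((d:ℕ):ℝ) * (V₀ + ε'/3) := by
          have h1t : (0:ℝ) < 1 - τ' := by linarith
          exact mul_le_mul_of_nonneg_left (le_of_lt hτa)
            (Real.rpow_nonneg (le_of_lt (inv_pos.2 h1t)) _)
      _ < V₀ + ε'/2 := hτ'1
    have hFlo : V₀ - ε'/2 < (μH[(d:ℝ)] (S x)).toReal := lt_of_lt_of_le hτb hlo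
    rw [habs x, abs_sub_lt_iff]
    constructor <;> linarith

end Main

end St5

open St5

/-- For `g(x) = (x, f(x))` with `f` of class `C¹` on an open set
`G ⊇ K`, `K` compact nonempty, the tangent spaces `T_{g(x)} = range Dg(x)` are
`k`-dimensional; the orthogonal projections onto them (and onto their orthogonal
complements) satisfy the Lipschitz-type bound
`‖P_{T(x)⊥} - P_{T(y)⊥}‖ = ‖P_{T(x)} - P_{T(y)}‖ ≤ (2M + 2M³)‖Dg(x) - Dg(y)‖` with
`M = sup_{x ∈ K} ‖Dg(x)‖`; in particular `w ↦ T_{g(w)}⊥` is continuous on `K`, and so is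
`w ↦ ℋ^{n-k}(P_{T_{g(w)}⊥}(C))` for any convex body `C`. -/
theorem statement5 (n k : ℕ) (hk1 : 1 ≤ k) (hkn : k ≤ n - 1)
    (G : Set (EuclideanSpace ℝ (Fin k))) (hG : IsOpen G)
    (K : Set (EuclideanSpace ℝ (Fin k))) (hKne : K.Nonempty) (hKcomp : IsCompact K)
    (hKG : K ⊆ G)
    (f : EuclideanSpace ℝ (Fin k) → EuclideanSpace ℝ (Fin (n - k)))
    (hf : ContDiffOn ℝ 1 f G)
    (g : EuclideanSpace ℝ (Fin k) → Euc n)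
    (hg : g = graphMap n k (by omega) f)
    (T : EuclideanSpace ℝ (Fin k) → Submodule ℝ (Euc n))
    (hT : ∀ x, T x = LinearMap.range (fderiv ℝ g x : EuclideanSpace ℝ (Fin k) →ₗ[ℝ] Euc n))
    (M : ℝ) (hM : M = ⨆ x ∈ K, ‖fderiv ℝ g x‖) :
    (∀ x ∈ K, Module.finrank ℝ (T x) = k)
    ∧ (∀ x ∈ K, ∀ y ∈ K,
        ‖projCLM (T x)ᗮ - projCLM (T y)ᗮ‖ = ‖projCLM (T x) - projCLM (T y)‖
        ∧ ‖projCLM (T x) - projCLM (T y)‖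
            ≤ (2 * M + 2 * M ^ 3) * ‖fderiv ℝ g x - fderiv ℝ g y‖)
    ∧ ContinuousOn (fun w => projCLM (T w)ᗮ) K
    ∧ (∀ C : Set (Euc n), IsConvexBody C →
        ContinuousOn (fun w => (μH[((n - k : ℕ) : ℝ)] (projF (T w)ᗮ '' C)).toReal) K) := by
  classical
  have hkn' : k ≤ n := by omega
  have hdf : ∀ x ∈ G, HasFDerivAt f (fderiv ℝ f x) x := fun x hx =>
    (((hf.differentiableOn one_ne_zero) x hx).differentiableAt (hG.mem_nhds hx)).hasFDerivAt
  have hgfun : g = fun x => embACLM n k x + embBCLM n k hkn' (f x) := by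
    rw [hg]; funext x; rw [graphMap_eq hkn' f x]; rfl
  have hgD : ∀ x ∈ G, HasFDerivAt g
      (embACLM n k + (embBCLM n k hkn').comp (fderiv ℝ f x)) x := by
    intro x hx
    rw [hgfun]
    exact ((embACLM n k).hasFDerivAt).add
      (((embBCLM n k hkn').hasFDerivAt).comp x (hdf x hx))
  have hDg : ∀ x ∈ G, fderiv ℝ g x = embACLM n k + (embBCLM n k hkn').comp (fderiv ℝ f x) :=
    fun x hx => (hgD x hx).fderiv
  have hlow : ∀ x ∈ G, ∀ v, ‖v‖ ≤ ‖fderiv ℝ g x v‖ := by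
    intro x hx v
    rw [hDg x hx]
    exact norm_le_graph_apply hkn' (fderiv ℝ f x) v
  have hDgcont : ContinuousOn (fun x => fderiv ℝ g x) K := by
    have h1 : ContinuousOn (fun x => fderiv ℝ f x) G :=
      hf.continuousOn_fderiv_of_isOpen hG le_rfl
    have h2 : ContinuousOn
        (fun x => embACLM n k + (embBCLM n k hkn').comp (fderiv ℝ f x)) G :=
      continuousOn_const.add
        (((ContinuousLinearMap.compL ℝ _ _ _ (embBCLM n k hkn')).continuous).comp_continuousOn h1)
    exact (h2.congr (fun x hx => (hDg x hx))).mono hKG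
  have hMbd : ∀ x ∈ K, ‖fderiv ℝ g x‖ ≤ M := by
    obtain ⟨c, hc⟩ := hKcomp.exists_bound_of_continuousOn hDgcont
    intro x hx
    rw [hM]
    have hb : BddAbove (Set.range fun x => ⨆ _ : x ∈ K, ‖fderiv ℝ g x‖) := by
      refine ⟨max c 0, ?_⟩
      rintro r ⟨y, rfl⟩
      show (⨆ _ : y ∈ K, ‖fderiv ℝ g y‖) ≤ max c 0
      by_cases hy : y ∈ K
      · rw [ciSup_pos (f := fun _ => ‖fderiv ℝ g y‖) hy]
        exact le_trans (hc y hy) (le_max_left _ _)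
      · haveI : IsEmpty (y ∈ K) := isEmpty_Prop.mpr hy
        rw [Real.iSup_of_isEmpty]
        exact le_max_right _ _
    have h1 : (⨆ _ : x ∈ K, ‖fderiv ℝ g x‖) ≤ ⨆ y, ⨆ _ : y ∈ K, ‖fderiv ℝ g y‖ :=
      le_ciSup hb x
    rwa [ciSup_pos (f := fun _ => ‖fderiv ℝ g x‖) hx] at h1
  have part1 : ∀ x ∈ K, Module.finrank ℝ (T x) = k := by
    intro x hx
    rw [hT x]
    have hinj : Function.Injective (fderiv ℝ g x) := by
      intro v w hvw
      have h0 : fderiv ℝ g x (v - w) = 0 := by rw [map_sub, hvw, sub_self]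
      have h1 := hlow x (hKG hx) (v - w)
      rw [h0, norm_zero] at h1
      have h2 : v - w = 0 := by
        rw [← norm_eq_zero]; exact le_antisymm h1 (norm_nonneg _)
      exact sub_eq_zero.1 h2
    rw [show (LinearMap.range ((fderiv ℝ g x) : EuclideanSpace ℝ (Fin k) →ₗ[ℝ] Euc n) : Submodule ℝ (Euc n))
      = LinearMap.range ((fderiv ℝ g x) : EuclideanSpace ℝ (Fin k) →ₗ[ℝ] Euc n) from rfl]
    rw [LinearMap.finrank_range_of_inj hinj]
    exact finrank_euclideanSpace_fin
  have part2 : ∀ x ∈ K, ∀ y ∈ K,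
      ‖projCLM (T x)ᗮ - projCLM (T y)ᗮ‖ = ‖projCLM (T x) - projCLM (T y)‖
      ∧ ‖projCLM (T x) - projCLM (T y)‖
          ≤ (2 * M + 2 * M ^ 3) * ‖fderiv ℝ g x - fderiv ℝ g y‖ := by
    intro x hx y hy
    constructor
    · rw [projCLM_orthogonal (T x), projCLM_orthogonal (T y), sub_sub_sub_cancel_left,
        norm_sub_rev]
    · rw [hT x, hT y]
      exact proj_diff_bound _ _ (hlow x (hKG hx)) (hlow y (hKG hy)) M (hMbd x hx) (hMbd y hy)
  have hM0 : 0 ≤ M := by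
    obtain ⟨x₀, hx₀⟩ := hKne
    exact le_trans (norm_nonneg _) (hMbd x₀ hx₀)
  have part3 : ContinuousOn (fun w => projCLM (T w)ᗮ) K := by
    have hP : ContinuousOn (fun w => projCLM (T w)) K := by
      intro w₀ hw₀
      have hD := hDgcont w₀ hw₀
      rw [Metric.continuousWithinAt_iff] at hD ⊢
      intro ε hε
      set c : ℝ := 2 * M + 2 * M ^ 3 with hc
      have hc0 : 0 ≤ c := by positivity
      obtain ⟨δ, hδ0, hδ⟩ := hD (ε / (c + 1)) (by positivity)
      refine ⟨δ, hδ0, fun {x} hxK hxd => ?_⟩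
      have hb := (part2 x hxK w₀ hw₀).2
      have hd2 := hδ hxK hxd
      rw [dist_eq_norm] at hd2 ⊢
      calc ‖projCLM (T x) - projCLM (T w₀)‖ ≤ c * ‖fderiv ℝ g x - fderiv ℝ g w₀‖ := hb
      _ ≤ c * (ε / (c + 1)) := by
          exact mul_le_mul_of_nonneg_left (le_of_lt hd2) hc0
      _ < ε := by
          rw [div_eq_inv_mul, ← mul_assoc]
          have h1 : c * (c + 1)⁻¹ < 1 := by
            rw [mul_inv_lt_iff₀ (by positivity), one_mul]; linarith
          calc c * (c + 1)⁻¹ * ε < 1 * ε := by exact mul_lt_mul_of_pos_right h1 hε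
          _ = ε := one_mul ε
    have heq : ∀ w, projCLM (T w)ᗮ = ContinuousLinearMap.id ℝ (Euc n) - projCLM (T w) :=
      fun w => projCLM_orthogonal (T w)
    simp only [heq]
    exact continuousOn_const.sub hP
  refine ⟨part1, part2, part3, ?_⟩
  intro C hC
  have hdimperp : ∀ x ∈ K, Module.finrank ℝ ↥(T x)ᗮ = n - k := by
    intro x hx
    have h1 := Submodule.finrank_add_finrank_orthogonal (T x)
    rw [part1 x hx, finrank_euclideanSpace_fin] at h1
    omega
  have hmain := measure_proj_continuousOn (fun w => (T w)ᗮ) hdimperp part3 hC.2.1 hC.2.2.1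
  exact hmain
end
end

section
/- Let n ≥ 2, k ∈ {1,…,n−1}, let S ⊆ ℝⁿ be a countably ℋ^k-rectifiable set, and let C ⊆ ℝⁿ be a convex body of dimension m with k + m < n. Then λⁿ(S ⊕ rC) = 0 for every r > 0; in particular, the k-dimensional C-anisotropic Minkowski content of S exists and ℳ^k_C(S) = lim_{r→0+} λⁿ(S ⊕ rC)/(ω_{n−k} r^{n−k}) = 0. -/
open MeasureTheory Metric Filter Set
open scoped ENNReal NNReal Topology Pointwise

noncomputable section

section AuxLemmas

open Module
open scoped RealInnerProductSpace

lemma vol_zero_of_dimH_lt' {n : ℕ} {s : Set (Euc n)} (h : dimH s < n) : volume s = 0 := by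
  rcases Nat.eq_zero_or_pos n with hn | hn
  · subst hn; exact absurd h (by simpa using (zero_le (dimH s)).not_gt)
  · set e := EuclideanSpace.equiv (Fin n) ℝ with he
    have hd : dimH ((e : Euc n ≃L[ℝ] (Fin n → ℝ)) '' s) < n := by
      rwa [ContinuousLinearEquiv.dimH_image]
    have hvol : volume ((e : Euc n ≃L[ℝ] (Fin n → ℝ)) '' s) = 0 := by
      have hac : (volume : Measure (Fin n → ℝ)) ≪ μH[((n : ℝ≥0) : ℝ)] := by
        have : (μH[((n : ℝ≥0) : ℝ)] : Measure (Fin n → ℝ)) = volume := by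
          have := hausdorffMeasure_pi_real (ι := Fin n)
          simpa using this
        rw [this]
      refine measure_zero_of_dimH_lt hac ?_
      simpa using hd
    set t := toMeasurable volume ((e : Euc n ≃L[ℝ] (Fin n → ℝ)) '' s) with ht
    have htvol : volume t = 0 := by rw [ht, measure_toMeasurable]; exact hvol
    have hsub : s ⊆ (MeasurableEquiv.toLp 2 (Fin n → ℝ)).symm ⁻¹' t := by
      intro x hx
      exact subset_toMeasurable _ _ ⟨x, hx, rfl⟩
    refine measure_mono_null hsub ?_
    rw [(EuclideanSpace.volume_preserving_symm_measurableEquiv_toLp (Fin n)).measure_preimage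
      (measurableSet_toMeasurable _ _).nullMeasurableSet]
    exact htvol

set_option maxHeartbeats 1000000 in
lemma null_add_subspace' {n mm k : ℕ} (hk : k + mm < n) (L : Submodule ℝ (Euc n))
    (hL : finrank ℝ L = mm) (N : Set (Euc n)) (hN : μH[(k : ℝ)] N = 0)
    (D : Set (Euc n)) (hD : D ⊆ (L : Set (Euc n))) : volume (N + D) = 0 := by
  classical
  have hfr : finrank ℝ (Euc n) = n := finrank_euclideanSpace_fin
  have hperp : finrank ℝ (Lᗮ : Submodule ℝ (Euc n)) = n - mm := by
    have h2 := Submodule.finrank_add_finrank_orthogonal L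
    rw [hfr, hL] at h2
    omega
  let b1 : OrthonormalBasis (Fin (n - mm)) ℝ Lᗮ :=
    (stdOrthonormalBasis ℝ Lᗮ).reindex (finCongr hperp)
  let b2 : OrthonormalBasis (Fin mm) ℝ L :=
    (stdOrthonormalBasis ℝ L).reindex (finCongr hL)
  let v : Fin (n - mm) ⊕ Fin mm → Euc n :=
    Sum.elim (fun j => (b1 j : Euc n)) (fun j => (b2 j : Euc n))
  have hb1mem : ∀ j, (b1 j : Euc n) ∈ Lᗮ := fun j => SetLike.coe_mem _
  have hb2mem : ∀ j, (b2 j : Euc n) ∈ L := fun j => SetLike.coe_mem _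
  have hcross : ∀ (x : Euc n), x ∈ L → ∀ (y : Euc n), y ∈ Lᗮ → ⟪x, y⟫ = 0 := by
    intro x hx y hy
    exact (Submodule.mem_orthogonal L y).mp hy x hx
  have hv : Orthonormal ℝ v := by
    rw [orthonormal_iff_ite]
    have h1 := b1.orthonormal
    have h2 := b2.orthonormal
    rw [orthonormal_iff_ite] at h1 h2
    rintro (i | i) (j | j)
    · simpa [v, Submodule.coe_inner] using h1 i j
    · simp only [v, Sum.elim_inl, Sum.elim_inr]
      rw [real_inner_comm]
      simp [hcross _ (hb2mem j) _ (hb1mem i)]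
    · simp only [v, Sum.elim_inl, Sum.elim_inr]
      simp [hcross _ (hb2mem i) _ (hb1mem j)]
    · simpa [v, Submodule.coe_inner] using h2 i j
  have hcard : Fintype.card (Fin (n - mm) ⊕ Fin mm) = finrank ℝ (Euc n) := by
    simp [hfr]; omega
  have : Nonempty (Fin (n - mm) ⊕ Fin mm) := ⟨Sum.inl ⟨0, by omega⟩⟩
  let bas := basisOfLinearIndependentOfCardEqFinrank hv.linearIndependent hcard
  have hbas : ⇑bas = v := coe_basisOfLinearIndependentOfCardEqFinrank _ _
  let b : OrthonormalBasis (Fin (n - mm) ⊕ Fin mm) ℝ (Euc n) :=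
    bas.toOrthonormalBasis (by rwa [hbas])
  have hb : ∀ i, b i = v i := by
    intro i
    rw [show ⇑b = ⇑bas from Basis.coe_toOrthonormalBasis _ _, hbas]
  -- the first-block coordinate map
  let F : Euc n → (Fin (n - mm) → ℝ) := fun x j => ⟪v (Sum.inl j), x⟫
  have hFlip : LipschitzWith 1 F := by
    refine LipschitzWith.of_dist_le_mul fun x y => ?_
    simp only [NNReal.coe_one, one_mul]
    refine (dist_pi_le_iff dist_nonneg).2 fun j => ?_
    have : F x j - F y j = ⟪v (Sum.inl j), x - y⟫ := by
      simp [F, inner_sub_right]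
    rw [Real.dist_eq, this]
    calc |⟪v (Sum.inl j), x - y⟫| ≤ ‖v (Sum.inl j)‖ * ‖x - y‖ := abs_real_inner_le_norm _ _
    _ = ‖x - y‖ := by rw [hv.1 (Sum.inl j), one_mul]
    _ = dist x y := (dist_eq_norm x y).symm
  have hFadd : ∀ (x c : Euc n), c ∈ L → F (x + c) = F x := by
    intro x c hc
    funext j
    have : ⟪v (Sum.inl j), c⟫ = 0 := by
      rw [real_inner_comm]
      exact hcross _ hc _ (hb1mem j)
    show (⟪v (Sum.inl j), x + c⟫ : ℝ) = ⟪v (Sum.inl j), x⟫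
    rw [inner_add_right, this, add_zero]
  -- F '' N is Lebesgue-null in ℝ^{n-mm}
  have hdimN : dimH N ≤ (k : ℝ≥0∞) := by
    have : dimH N ≤ ((k : ℝ≥0) : ℝ≥0∞) :=
      dimH_le_of_hausdorffMeasure_ne_top
        (by rw [show ((k : ℝ≥0) : ℝ) = (k : ℝ) by norm_cast, hN]; exact ENNReal.zero_ne_top)
    simpa using this
  have hFNvol : volume (F '' N) = 0 := by
    have hac : (volume : Measure (Fin (n - mm) → ℝ)) ≪ μH[(((n - mm : ℕ) : ℝ≥0) : ℝ)] := by
      have h0 := hausdorffMeasure_pi_real (ι := Fin (n - mm))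
      rw [Fintype.card_fin] at h0
      have hcast : ((((n - mm : ℕ) : ℝ≥0)) : ℝ) = ((n - mm : ℕ) : ℝ) := by norm_cast
      rw [hcast, h0]
    refine measure_zero_of_dimH_lt hac ?_
    refine lt_of_le_of_lt ((hFlip.dimH_image_le N).trans hdimN) ?_
    have : k < n - mm := by omega
    exact_mod_cast (by exact_mod_cast this : (k : ℝ≥0∞) < ((n - mm : ℕ) : ℝ≥0∞))
  set t := toMeasurable volume (F '' N) with htdef
  have htvol : volume t = 0 := by rw [htdef, measure_toMeasurable]; exact hFNvol
  have htmeas : MeasurableSet t := measurableSet_toMeasurable _ _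
  -- measure-preserving coordinate equivalence
  let E : Euc n ≃ᵐ (Fin (n - mm) → ℝ) × (Fin mm → ℝ) :=
    (b.measurableEquiv.trans (MeasurableEquiv.toLp 2 (Fin (n - mm) ⊕ Fin mm → ℝ)).symm).trans
      (MeasurableEquiv.sumPiEquivProdPi (fun _ => ℝ))
  have hE : MeasurePreserving E volume volume := by
    have h3 : MeasurePreserving
        (MeasurableEquiv.sumPiEquivProdPi (fun _ : Fin (n - mm) ⊕ Fin mm => ℝ))
        volume volume := by
      have := (volume_measurePreserving_sumPiEquivProdPi_symm
        (fun _ : Fin (n - mm) ⊕ Fin mm => ℝ)).symm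
      simpa using this
    exact h3.comp ((EuclideanSpace.volume_preserving_symm_measurableEquiv_toLp _).comp
      b.measurePreserving_measurableEquiv)
  have hEfst : ∀ x, (E x).1 = F x := by
    intro x
    funext j
    show b.repr x (Sum.inl j) = F x j
    rw [b.repr_apply_apply, hb]
  have hsub : N + D ⊆ E ⁻¹' (t ×ˢ (univ : Set (Fin mm → ℝ))) := by
    rintro x hx
    rcases Set.mem_add.1 hx with ⟨a, ha, c, hc, rfl⟩
    refine ⟨?_, trivial⟩
    rw [hEfst, hFadd a c (hD hc)]
    exact subset_toMeasurable _ _ ⟨a, ha, rfl⟩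
  refine measure_mono_null hsub ?_
  rw [hE.measure_preimage (htmeas.prod MeasurableSet.univ).nullMeasurableSet,
    Measure.volume_eq_prod, Measure.prod_prod, htvol, zero_mul]

end AuxLemmas

/-- If `S` is countably `ℋ^k`-rectifiable and `C` is a convex body of
dimension `m` with `k + m < n`, then `λⁿ(S ⊕ rC) = 0` for all `r > 0`; in particular the
`k`-dimensional `C`-anisotropic Minkowski content of `S` exists and equals `0`. -/

theorem statement16 (n k m : ℕ) (hn : 2 ≤ n) (hk1 : 1 ≤ k) (hkn : k ≤ n - 1)
    (S : Set (Euc n)) (hS : CountablyRectifiable n k S)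
    (C : Set (Euc n)) (hC : IsConvexBody C)
    (hdim : Module.finrank ℝ (affineSpan ℝ C).direction = m)
    (hkm : k + m < n) :
    (∀ r : ℝ, 0 < r → volume (S + r • C) = 0)
    ∧ Tendsto (fun r : ℝ => minkRatio n k S C r) (𝓝[>] (0 : ℝ)) (𝓝 0) := by
  obtain ⟨hSm, f, hLip, hNnull⟩ := hS
  set L := (affineSpan ℝ C).direction with hLdef
  have h0C : (0 : Euc n) ∈ C := intrinsicInterior_subset hC.2.2.2
  have hCL : C ⊆ (L : Set (Euc n)) := by
    intro x hx
    have hx' : x ∈ affineSpan ℝ C := subset_affineSpan ℝ C hx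
    have h0' : (0 : Euc n) ∈ affineSpan ℝ C := subset_affineSpan ℝ C h0C
    have := AffineSubspace.vsub_mem_direction hx' h0'
    simpa [vsub_eq_sub] using this
  have key : ∀ r : ℝ, 0 < r → volume (S + r • C) = 0 := by
    intro r _
    have hrCL : r • C ⊆ (L : Set (Euc n)) := by
      rintro _ ⟨c, hc, rfl⟩
      exact L.smul_mem r (hCL hc)
    have hsplit : S + r • C ⊆
        (⋃ i, (Set.range (f i) + r • C)) ∪ ((S \ ⋃ i, Set.range (f i)) + r • C) := by
      rintro x hx
      rcases Set.mem_add.1 hx with ⟨a, ha, c, hc, rfl⟩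
      by_cases hmem : a ∈ ⋃ i, Set.range (f i)
      · rcases mem_iUnion.1 hmem with ⟨i, hi⟩
        exact Or.inl (mem_iUnion.2 ⟨i, Set.add_mem_add hi hc⟩)
      · exact Or.inr (Set.add_mem_add ⟨ha, hmem⟩ hc)
    refine measure_mono_null hsplit (measure_union_null ?_ ?_)
    · refine measure_iUnion_null fun i => ?_
      obtain ⟨K, hK⟩ := hLip i
      set g : EuclideanSpace ℝ (Fin k) × L → Euc n :=
        fun p => f i p.1 + (p.2 : Euc n) with hgdef
      have hg : LipschitzWith (K + 1) g := by
        have h1 : LipschitzWith K (fun p : EuclideanSpace ℝ (Fin k) × L => f i p.1) := by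
          simpa [Function.comp_def] using hK.comp LipschitzWith.prod_fst
        have h2 : LipschitzWith 1 (fun p : EuclideanSpace ℝ (Fin k) × L => (p.2 : Euc n)) := by
          simpa [Function.comp_def] using (L.subtypeₗᵢ.isometry.lipschitz.comp LipschitzWith.prod_snd)
        exact h1.add h2
      have hsub2 : Set.range (f i) + r • C ⊆ Set.range g := by
        rintro x hx
        rcases Set.mem_add.1 hx with ⟨u, ⟨a, rfl⟩, w, hw, rfl⟩
        exact ⟨(a, ⟨w, hrCL hw⟩), rfl⟩
      refine measure_mono_null hsub2 (vol_zero_of_dimH_lt' ?_)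
      have hfrk : Module.finrank ℝ (EuclideanSpace ℝ (Fin k) × L) = k + m := by
        rw [Module.finrank_prod, finrank_euclideanSpace_fin, hdim]
      have hle : dimH (Set.range g) ≤ ((k + m : ℕ) : ℝ≥0∞) := by
        refine (hg.dimH_range_le).trans ?_
        rw [Real.dimH_univ_eq_finrank, hfrk]
      exact lt_of_le_of_lt hle (by exact_mod_cast hkm)
    · exact null_add_subspace' hkm L hdim _ hNnull _ hrCL
  refine ⟨key, ?_⟩
  have hev : (fun r : ℝ => minkRatio n k S C r) =ᶠ[𝓝[>] (0 : ℝ)] (fun _ => (0 : ℝ≥0∞)) := by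
    filter_upwards [self_mem_nhdsWithin] with r hr
    have : volume (S + r • C) = 0 := key r hr
    rw [minkRatio, this, ENNReal.zero_div]
  exact Tendsto.congr' hev.symm tendsto_const_nhds
end
end
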